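/- Let $G$ be a $d$-closed graph on $n$ vertices with minimum degree at least $\delta$, and suppose $G$ contains a clique of size at least $d + (n - 1 - \delta)$. Then $G$ is the complete graph. -/

import Mathlib

open scoped Classical

/-- The rigidity matrix of a framework `(G, p)` in `ℝ^d`. -/
noncomputable def rigidityMatrix {V : Type*} (G : SimpleGraph V) (d : ℕ)
    (p : V → Fin d → ℝ) : Matrix G.edgeSet (V × Fin d) ℝ :=
  fun e wi =>
    if h : wi.1 ∈ (e : Sym2 V) then p wi.1 wi.2 - p (Sym2.Mem.other h) wi.2 else 0

/-- An embedding is generic if its `d|V|` coordinates are algebraically independent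
over the rationals. -/
def IsGenericEmbedding {V : Type*} {d : ℕ} (p : V → Fin d → ℝ) : Prop :=
  AlgebraicIndependent ℚ (fun vi : V × Fin d => p vi.1 vi.2)

/-- A graph is `d`-closed if it equals its own `d`-rigidity closure: whenever adding a
non-edge `{u,v}` does not increase the rank of the generic rigidity matrix, `{u,v}` is
already an edge of `G`. -/
def IsDClosed {V : Type*} [Fintype V] (d : ℕ) (G : SimpleGraph V) : Prop :=
  ∀ u v : V, u ≠ v →
    (∀ p : V → Fin d → ℝ, IsGenericEmbedding p →
      (rigidityMatrix (G ⊔ SimpleGraph.fromEdgeSet {Sym2.mk u v}) d p).rank =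
        (rigidityMatrix G d p).rank) →
    G.Adj u v

/-!
By the degree bound, every vertex outside the clique `S` has at least `d` neighbours in `S`.
The complete graph on `d + 2` generic points minus one edge is infinitesimally rigid: a motion of
`d + 1` affinely independent points that preserves all their distances is a translation plus a
skew map, and a further point joined to `d` of them is dragged along rigidly. Hence in a
`d`-closed graph two vertices with a common `d`-clique of neighbours are adjacent. With cliques
inside `S` this joins every outside vertex to all of `S`, and then any two outside vertices.
-/

open Module Matrix Finset
open scoped InnerProductSpace

section InfinitesimalMotion

variable {E ι : Type*} [NormedAddCommGroup E] [InnerProductSpace ℝ E] [FiniteDimensional ℝ E]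
  [Fintype ι]

theorem exists_skew_linearMap_of_simplex_motion {P Q : ι → E} {o Qo : E}
    (hP : LinearIndependent ℝ (fun i => P i - o)) (hcard : Fintype.card ι = finrank ℝ E)
    (hPP : ∀ i j, ⟪P i - P j, Q i - Q j⟫_ℝ = 0) (hoP : ∀ i, ⟪P i - o, Q i - Qo⟫_ℝ = 0) :
    ∃ L : E →ₗ[ℝ] E, (∀ x, ⟪x, L x⟫_ℝ = 0) ∧ ∀ i, Q i = Qo + L (P i - o) := by
  let b := basisOfLinearIndependentOfCardEqFinrank' _ hP hcard
  let L := b.constr ℝ fun i => Q i - Qo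
  have hL : ∀ i, L (P i - o) = Q i - Qo := fun i => by
    simpa only [b, coe_basisOfLinearIndependentOfCardEqFinrank'] using b.constr_basis ℝ _ i
  let B : E →ₗ[ℝ] E →ₗ[ℝ] ℝ := (innerₗ E).compl₂ L + ((innerₗ E).compl₂ L).flip
  have hB : B = 0 := by
    refine LinearMap.ext_basis b b fun i j => ?_
    have hij := hPP i j
    have hi := hoP i
    have hj := hoP j
    simp only [B, b, LinearMap.add_apply, LinearMap.compl₂_apply, LinearMap.flip_apply,
      innerₗ_apply_apply, LinearMap.zero_apply, coe_basisOfLinearIndependentOfCardEqFinrank',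
      hL]
    simp only [inner_sub_left, inner_sub_right] at hij hi hj ⊢
    linarith
  refine ⟨L, fun x => ?_, fun i => by rw [hL]; abel⟩
  have hx := LinearMap.congr_fun₂ hB x x
  simp only [B, LinearMap.add_apply, LinearMap.compl₂_apply, LinearMap.flip_apply,
    innerₗ_apply_apply, LinearMap.zero_apply] at hx
  linarith

theorem inner_sub_eq_zero_of_motion_of_common_simplex {P Q : ι → E} {v w Qv Qw : E}
    (hv : LinearIndependent ℝ (fun i => P i - v)) (hw : LinearIndependent ℝ (fun i => P i - w))
    (hcard : Fintype.card ι = finrank ℝ E)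
    (hPP : ∀ i j, ⟪P i - P j, Q i - Q j⟫_ℝ = 0) (hvP : ∀ i, ⟪P i - v, Q i - Qv⟫_ℝ = 0)
    (hwP : ∀ i, ⟪P i - w, Q i - Qw⟫_ℝ = 0) :
    ⟪v - w, Qv - Qw⟫_ℝ = 0 := by
  obtain ⟨L, hskew, hQ⟩ := exists_skew_linearMap_of_simplex_motion hv hcard hPP hvP
  set c := Qw - Qv - L (w - v)
  have hc : c = 0 := by
    refine InnerProductSpace.ext_inner_left_basis
      (basisOfLinearIndependentOfCardEqFinrank' _ hw hcard) fun i => ?_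
    have hi := hwP i
    rw [show Q i - Qw = L (P i - w) - c by simp only [c, hQ, map_sub]; abel,
      inner_sub_right, hskew] at hi
    simp only [coe_basisOfLinearIndependentOfCardEqFinrank', inner_zero_right]
    linarith
  rw [show Qv - Qw = L (v - w) by rw [← neg_sub, sub_eq_zero.mp hc, ← map_neg, neg_sub],
    hskew]

end InfinitesimalMotion

theorem IsGenericEmbedding.linearIndependent_sub {V : Type*} {d : ℕ} {p : V → Fin d → ℝ}
    (hp : IsGenericEmbedding p) (u : Fin d ↪ V) {z : V} (hz : ∀ i, u i ≠ z) :
    LinearIndependent ℝ (fun i => p (u i) - p z) := by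
  let D : Matrix (Fin d) (Fin d) (MvPolynomial (V × Fin d) ℚ) :=
    .of fun i j => .X (u i, j) - .X (z, j)
  let χ : V × Fin d → ℚ := fun vj => if vj.1 = u vj.2 then 1 else 0
  -- `D.det` is a nonzero polynomial: at `u i ↦ eᵢ`, `z ↦ 0` it evaluates to `det 1`.
  have hχ : (MvPolynomial.eval χ).mapMatrix D = 1 := by
    ext i j
    simp [D, χ, Matrix.one_apply, u.injective.eq_iff, (hz j).symm]
  have hD : D.det ≠ 0 := fun h => by
    simpa [RingHom.map_det, hχ] using congrArg (MvPolynomial.eval χ) h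
  have hdet : (MvPolynomial.aeval fun vi : V × Fin d => p vi.1 vi.2) D.det =
      (Matrix.of fun i j => p (u i) j - p z j).det := by
    rw [AlgHom.map_det]
    congr 1
    ext i j
    simp [D]
  refine Matrix.linearIndependent_rows_iff_isUnit.2 ((Matrix.isUnit_iff_isUnit_det _).2 ?_)
  exact isUnit_iff_ne_zero.2 fun h => hD (hp.eq_zero_of_aeval_eq_zero _ (hdet.trans h))

section RigidityRow

variable {V : Type*} {d : ℕ} (p : V → Fin d → ℝ)

noncomputable def rigidityRow (e : Sym2 V) : V × Fin d → ℝ :=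
  fun wi => if h : wi.1 ∈ e then p wi.1 wi.2 - p (Sym2.Mem.other h) wi.2 else 0

theorem range_rigidityMatrix (G : SimpleGraph V) :
    Set.range (rigidityMatrix G d p) = rigidityRow p '' G.edgeSet := by
  rw [Set.image_eq_range]
  rfl

theorem rigidityRow_mk_left (a b : V) (i : Fin d) :
    rigidityRow p s(a, b) (a, i) = p a i - p b i := by
  rw [rigidityRow, dif_pos (Sym2.mem_mk_left a b), Sym2.congr_right.mp (Sym2.other_spec _)]

theorem rigidityRow_of_notMem {e : Sym2 V} {x : V} (hx : x ∉ e) (i : Fin d) :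
    rigidityRow p e (x, i) = 0 :=
  dif_neg hx

theorem dotProduct_rigidityRow [Fintype V] {a b : V} (hab : a ≠ b) (q : V × Fin d → ℝ) :
    q ⬝ᵥ rigidityRow p s(a, b) = ∑ i, (p a i - p b i) * (q (a, i) - q (b, i)) := by
  rw [dotProduct, Fintype.sum_prod_type, Fintype.sum_eq_add a b hab, ← Finset.sum_add_distrib]
  · refine Finset.sum_congr rfl fun i _ => ?_
    rw [rigidityRow_mk_left, Sym2.eq_swap, rigidityRow_mk_left]
    ring
  · rintro x ⟨hxa, hxb⟩
    simp [rigidityRow_of_notMem p (e := s(a, b)) (x := x) (by simp [hxa, hxb])]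

end RigidityRow

theorem mem_span_of_forall_dotProduct_eq_zero {K n : Type*} [Field K] [Fintype n]
    {S : Set (n → K)} {r : n → K} (h : ∀ q : n → K, (∀ s ∈ S, q ⬝ᵥ s = 0) → q ⬝ᵥ r = 0) :
    r ∈ Submodule.span K S := by
  classical
  by_contra hr
  obtain ⟨f, hfr, hf⟩ := Submodule.exists_dual_map_eq_bot_of_notMem hr inferInstance
  have hq : ∀ x, (dotProductEquiv K n).symm f ⬝ᵥ x = f x := fun x => by
    conv_rhs => rw [← (dotProductEquiv K n).apply_symm_apply f]
    rfl
  refine hfr ?_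
  rw [← hq]
  refine h _ fun s hs => ?_
  rw [hq, ← Submodule.mem_bot K, ← hf]
  exact Submodule.mem_map_of_mem (Submodule.subset_span hs)

section Rigidity

variable {V : Type*} [Fintype V] {d : ℕ} {G : SimpleGraph V} {p : V → Fin d → ℝ} {v w : V}

theorem rank_rigidityMatrix_sup_edge (hvw : v ≠ w)
    (h : rigidityRow p s(v, w) ∈ Submodule.span ℝ (rigidityRow p '' G.edgeSet)) :
    (rigidityMatrix (G ⊔ SimpleGraph.fromEdgeSet {s(v, w)}) d p).rank =
      (rigidityMatrix G d p).rank := by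
  have hE : (G ⊔ SimpleGraph.fromEdgeSet {s(v, w)}).edgeSet = G.edgeSet ∪ {s(v, w)} := by
    rw [SimpleGraph.edgeSet_sup, SimpleGraph.edgeSet_fromEdgeSet,
      sdiff_eq_left.mpr (by simpa using hvw)]
  rw [Matrix.rank_eq_finrank_span_row, Matrix.rank_eq_finrank_span_row, Matrix.row, Matrix.row,
    range_rigidityMatrix, range_rigidityMatrix, hE, Set.image_union, Set.image_singleton,
    Submodule.span_union, sup_eq_left.mpr ((Submodule.span_singleton_le_iff_mem _ _).mpr h)]

theorem rigidityRow_mem_span_of_isNClique (hp : IsGenericEmbedding p) {U : Finset V}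
    (hU : G.IsNClique d U) (hvw : v ≠ w) (hv : ∀ x ∈ U, G.Adj v x) (hw : ∀ x ∈ U, G.Adj w x) :
    rigidityRow p s(v, w) ∈ Submodule.span ℝ (rigidityRow p '' G.edgeSet) := by
  refine mem_span_of_forall_dotProduct_eq_zero fun q hq => ?_
  -- A vector `q` orthogonal to the rows of `G` is an infinitesimal motion `Q` of the framework `P`.
  let P : V → EuclideanSpace ℝ (Fin d) := fun x => WithLp.toLp 2 (p x)
  let Q : V → EuclideanSpace ℝ (Fin d) := fun x => WithLp.toLp 2 fun i => q (x, i)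
  have hdot : ∀ {a b}, a ≠ b → q ⬝ᵥ rigidityRow p s(a, b) = ⟪P a - P b, Q a - Q b⟫_ℝ :=
    fun hab => by
      rw [dotProduct_rigidityRow p hab]
      simp [P, Q, PiLp.inner_apply, mul_comm]
  have hmotion : ∀ {a b}, G.Adj a b → ⟪P a - P b, Q a - Q b⟫_ℝ = 0 := fun hab =>
    (hdot hab.ne).symm.trans (hq _ ⟨s(_, _), hab, rfl⟩)
  let e := U.equivFinOfCardEq hU.card_eq
  let u : Fin d ↪ V := e.symm.toEmbedding.trans (Function.Embedding.subtype _)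
  have hu : ∀ i, u i ∈ U := fun i => (e.symm i).2
  have hli : ∀ z, (∀ i, u i ≠ z) → LinearIndependent ℝ (fun i => P (u i) - P z) :=
    fun z hz => by
      simpa [P, Function.comp_def] using (hp.linearIndependent_sub u hz).map'
        (WithLp.linearEquiv 2 ℝ (Fin d → ℝ)).symm.toLinearMap (LinearEquiv.ker _)
  rw [hdot hvw]
  refine inner_sub_eq_zero_of_motion_of_common_simplex
    (hli v fun i => (hv _ (hu i)).ne') (hli w fun i => (hw _ (hu i)).ne') (by simp)
    (fun i j => ?_) (fun i => hmotion (hv _ (hu i)).symm) (fun i => hmotion (hw _ (hu i)).symm)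
  obtain rfl | hij := eq_or_ne i j
  · simp
  · exact hmotion (hU.isClique (hu i) (hu j) (u.injective.ne hij))

theorem IsDClosed.adj_of_isNClique (hG : IsDClosed d G) {U : Finset V}
    (hU : G.IsNClique d U) (hvw : v ≠ w) (hv : ∀ x ∈ U, G.Adj v x) (hw : ∀ x ∈ U, G.Adj w x) :
    G.Adj v w :=
  hG v w hvw fun _ hp =>
    rank_rigidityMatrix_sup_edge hvw (rigidityRow_mem_span_of_isNClique hp hU hvw hv hw)

end Rigidity

namespace SimpleGraph

variable {V : Type*} {G : SimpleGraph V} {S : Finset V} {d : ℕ}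

theorem card_filter_not_adj_add_degree_lt [Fintype V] [DecidableRel G.Adj] {v : V}
    (hv : v ∉ S) :
    #{x ∈ S | ¬G.Adj v x} + G.degree v < Fintype.card V := by
  have hdisj : Disjoint {x ∈ S | ¬G.Adj v x} (G.neighborFinset v) :=
    Finset.disjoint_left.mpr fun x hx hx' =>
      (mem_filter.1 hx).2 ((G.mem_neighborFinset v x).1 hx')
  have hsub : {x ∈ S | ¬G.Adj v x} ∪ G.neighborFinset v ⊆ univ.erase v := by
    intro x hx
    rcases mem_union.1 hx with hx | hx
    · exact mem_erase.2 ⟨ne_of_mem_of_not_mem (mem_filter.1 hx).1 hv, mem_univ x⟩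
    · exact mem_erase.2 ⟨((G.mem_neighborFinset v x).1 hx).ne', mem_univ x⟩
  rw [← card_neighborFinset_eq_degree, ← card_union_of_disjoint hdisj, ← card_univ]
  exact (card_le_card hsub).trans_lt (card_erase_lt_of_mem (mem_univ v))

theorem eq_top_of_isClique_of_le_card_filter_adj [DecidableRel G.Adj]
    (hG : ∀ U : Finset V, G.IsNClique d U → ∀ ⦃v w⦄, v ≠ w →
      (∀ x ∈ U, G.Adj v x) → (∀ x ∈ U, G.Adj w x) → G.Adj v w)
    (hS : G.IsClique (S : Set V)) (hN : ∀ v ∉ S, d ≤ #{x ∈ S | G.Adj v x}) :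
    G = ⊤ := by
  have hout : ∀ v ∉ S, ∀ s ∈ S, G.Adj v s := by
    intro v hv s hs
    by_contra hvs
    obtain ⟨U, hUS, hUcard⟩ := exists_subset_card_eq (hN v hv)
    have hU : ∀ x ∈ U, x ∈ S ∧ G.Adj v x := fun x hx => mem_filter.1 (hUS hx)
    refine hvs (hG U ⟨hS.subset fun x hx => (hU x hx).1, hUcard⟩
      (ne_of_mem_of_not_mem hs hv).symm (fun x hx => (hU x hx).2)
      fun x hx => hS hs (hU x hx).1 ?_)
    rintro rfl
    exact hvs (hU s hx).2
  ext a b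
  refine ⟨G.ne_of_adj, fun hab => ?_⟩
  by_cases ha : a ∈ S <;> by_cases hb : b ∈ S
  · exact hS ha hb hab
  · exact (hout b hb a ha).symm
  · exact hout a ha b hb
  · obtain ⟨U, hUS, hUcard⟩ := exists_subset_card_eq ((hN a ha).trans (card_filter_le _ _))
    exact hG U ⟨hS.subset hUS, hUcard⟩ hab (fun x hx => hout a ha x (hUS hx))
      fun x hx => hout b hb x (hUS hx)

end SimpleGraph

theorem stmt_11_general {V : Type*} [Fintype V] (d δ n : ℕ)
    (hn : Fintype.card V = n) (G : SimpleGraph V)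
    [DecidableRel G.Adj] (hclosed : IsDClosed d G)
    (hδ : ∀ v : V, δ ≤ G.degree v)
    (S : Finset V) (hS : G.IsClique (S : Set V))
    (hScard : (d : ℝ) + ((n : ℝ) - 1 - (δ : ℝ)) ≤ (S.card : ℝ)) :
    G = ⊤ := by
  refine G.eq_top_of_isClique_of_le_card_filter_adj
    (fun U hU _ _ hvw hv hw => hclosed.adj_of_isNClique hU hvw hv hw) hS fun v hv => ?_
  have hsplit := card_filter_add_card_filter_not (s := S) (G.Adj v)
  have hnonadj : #{x ∈ S | ¬G.Adj v x} + G.degree v + 1 ≤ n :=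
    hn ▸ G.card_filter_not_adj_add_degree_lt hv
  have hdeg := hδ v
  have hreal : (d : ℝ) ≤ #{x ∈ S | G.Adj v x} := by
    rify at hsplit hnonadj hdeg
    linarith
  exact_mod_cast hreal

/-- Lemma 3.3. Let `G` be a `d`-closed graph on `n` vertices with
minimum degree at least `δ`, containing a clique of size at least `d + (n - 1 - δ)`.
Then `G` is the complete graph. -/
theorem stmt_11 {V : Type*} [Fintype V] [DecidableEq V] (d δ n : ℕ)
    (hn : Fintype.card V = n) (hcard : d + 1 ≤ n) (G : SimpleGraph V)
    [DecidableRel G.Adj] (hclosed : IsDClosed d G)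
    (hδ : ∀ v : V, δ ≤ G.degree v)
    (S : Finset V) (hS : G.IsClique (S : Set V))
    (hScard : (d : ℝ) + ((n : ℝ) - 1 - (δ : ℝ)) ≤ (S.card : ℝ)) :
    G = ⊤ :=
  stmt_11_general d δ n hn G hclosed hδ S hS hScard
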